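/- Let M be a compact metric space with a finite good covering 𝒰 = {U_1,…,U_N}. Then M is Lipschitz homotopy equivalent to D(𝒰). -/

import Mathlib

open Metric Set

/-- Two maps between metric spaces are *Lipschitz homotopic*. -/
def LipHomotopic {X Y : Type*} [MetricSpace X] [MetricSpace Y] (f g : X → Y) : Prop :=
  ∃ (H : X × unitInterval → Y) (K : NNReal), LipschitzWith K H ∧
    (∀ x, H (x, 0) = f x) ∧ (∀ x, H (x, 1) = g x)

/-- Two metric spaces are *Lipschitz homotopy equivalent*. -/
def LipHomotopyEquiv (X Y : Type*) [MetricSpace X] [MetricSpace Y] : Prop :=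
  ∃ (f : X → Y) (g : Y → X) (Kf Kg : NNReal),
    LipschitzWith Kf f ∧ LipschitzWith Kg g ∧
      LipHomotopic (g ∘ f) id ∧ LipHomotopic (f ∘ g) id

/-- A subset `V` of a metric space admits a *Lipschitz strong deformation retraction to a
point*. -/
def IsLipSDRToPoint {X : Type*} [MetricSpace X] (V : Set X) : Prop :=
  ∃ (p : V) (F : V × unitInterval → V) (K : NNReal),
    LipschitzWith K F ∧ (∀ x, F (x, 0) = x) ∧ (∀ x, F (x, 1) = p) ∧ (∀ t, F (p, t) = p)

/-- A locally finite open covering is *good*. -/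
def IsGoodCovering {X : Type*} [MetricSpace X] {J : Type*} (U : J → Set X) : Prop :=
  (∀ j, IsOpen (U j)) ∧ (⋃ j, U j) = univ ∧ LocallyFinite U ∧
    (∀ j, IsCompact (closure (U j))) ∧
    ∀ s : Finset J, s.Nonempty → (⋂ j ∈ s, U j).Nonempty → IsLipSDRToPoint (⋂ j ∈ s, U j)

/-- The geometric realization of the nerve of a finite covering, with the sup metric. -/
def NerveSet {M : Type*} [MetricSpace M] {N : ℕ} (U : Fin N → Set M) : Set (Fin N → ℝ) :=
  {θ | (∀ j, θ j ∈ Icc (0:ℝ) 1) ∧ ∑ j, θ j = 1 ∧ (⋂ j ∈ {j | θ j ≠ 0}, U j).Nonempty}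

/-- `D(𝒰) = {(θ, x) ∈ |𝒩_𝒰| × M : x ∈ ⋂_{j ∈ supp θ} U_j}`, as a subset of the `ℓ²`
product `|𝒩_𝒰| ×₂ M` (so that `d((θ,x),(θ',x'))² = d(θ,θ')² + d(x,x')²`). -/
def DSet {M : Type*} [MetricSpace M] {N : ℕ} (U : Fin N → Set M) :
    Set (WithLp 2 (↥(NerveSet U) × M)) :=
  {z | (WithLp.equiv 2 (↥(NerveSet U) × M) z).2 ∈
    ⋂ j ∈ {j | ((WithLp.equiv 2 (↥(NerveSet U) × M) z).1 : Fin N → ℝ) j ≠ 0}, U j}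

/-!
Normalising the functions `x ↦ d(x, M ∖ U_j)`, whose sum is bounded below on the compact space
`M`, gives a Lipschitz partition of unity `φ` subordinate to `𝒰`. The maps `x ↦ (φ(x), x)` and
`(θ, x) ↦ x` are then inverse Lipschitz homotopy equivalences: one composite is the identity of
`M`, and the other is joined to the identity of `D(𝒰)` by the straight-line homotopy
`((1 - t) φ(x) + t θ, x)`. This stays in `D(𝒰)` because the support of `(1 - t) φ(x) + t θ` lies in
`supp φ(x) ∪ supp θ`, and `x` lies in `U_j` for every `j` in either support.
-/

open scoped NNReal ENNReal

theorem LipschitzWith.finset_sum {X E ι : Type*} [PseudoEMetricSpace X] [SeminormedAddCommGroup E]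
    {f : ι → X → E} {K : ι → ℝ≥0} (s : Finset ι) (hf : ∀ i ∈ s, LipschitzWith (K i) (f i)) :
    LipschitzWith (∑ i ∈ s, K i) fun x => ∑ i ∈ s, f i x := by
  classical
  induction s using Finset.induction_on with
  | empty => simpa using LipschitzWith.const (0 : E)
  | insert i s hi ih =>
    simp only [Finset.sum_insert hi]
    exact (hf i (s.mem_insert_self i)).add (ih fun j hj => hf j (Finset.mem_insert_of_mem hj))

theorem LipschitzWith.pi {X ι : Type*} [PseudoEMetricSpace X] [Fintype ι] {f : ι → X → ℝ}
    {K : ℝ≥0} (hf : ∀ i, LipschitzWith K (f i)) : LipschitzWith K fun x i => f i x :=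
  fun x y => edist_pi_le_iff.2 fun i => hf i x y

theorem LipschitzWith.div_of_le {X : Type*} [PseudoMetricSpace X] {f g : X → ℝ} {Kf Kg : ℝ≥0}
    {ε : ℝ} (hf : LipschitzWith Kf f) (hg : LipschitzWith Kg g) (hf₀ : ∀ x, 0 ≤ f x)
    (hfg : ∀ x, f x ≤ g x) (hε : 0 < ε) (hgε : ∀ x, ε ≤ g x) :
    LipschitzWith (Real.toNNReal ((Kf + Kg) / ε)) fun x => f x / g x := by
  refine LipschitzWith.of_dist_le' fun x y => ?_
  have hgx := hε.trans_le (hgε x)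
  have hgy := hε.trans_le (hgε y)
  have hnum : |f x * g y - g x * f y| ≤ (Kf + Kg) * dist x y * g y :=
    calc |f x * g y - g x * f y| = |(f x - f y) * g y - f y * (g x - g y)| := by ring_nf
      _ ≤ dist (f x) (f y) * g y + f y * dist (g x) (g y) := by
        refine (abs_sub _ _).trans_eq ?_
        rw [abs_mul, abs_mul, abs_of_pos hgy, abs_of_nonneg (hf₀ y), Real.dist_eq, Real.dist_eq]
      _ ≤ Kf * dist x y * g y + g y * (Kg * dist x y) :=
        add_le_add (mul_le_mul_of_nonneg_right (hf.dist_le_mul x y) hgy.le)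
          (mul_le_mul (hfg y) (hg.dist_le_mul x y) dist_nonneg hgy.le)
      _ = (Kf + Kg) * dist x y * g y := by ring
  rw [Real.dist_eq, div_sub_div _ _ hgx.ne' hgy.ne', abs_div, abs_of_pos (mul_pos hgx hgy),
    div_le_iff₀ (mul_pos hgx hgy)]
  calc |f x * g y - g x * f y| ≤ (Kf + Kg) * dist x y * g y := hnum
    _ = (Kf + Kg) / ε * dist x y * (ε * g y) := by field_simp
    _ ≤ (Kf + Kg) / ε * dist x y * (g x * g y) := by gcongr; exact hgε x

theorem LipschitzWith.lineMap {Z E : Type*} [PseudoMetricSpace Z] [SeminormedAddCommGroup E]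
    [NormedSpace ℝ E] {a b : Z → E} {Ka Kb R : ℝ≥0} (ha : LipschitzWith Ka a)
    (hb : LipschitzWith Kb b) (hR : ∀ z, dist (a z) (b z) ≤ R) :
    LipschitzWith (max Ka Kb + R) fun p : Z × unitInterval =>
      AffineMap.lineMap (a p.1) (b p.1) (p.2 : ℝ) := by
  refine LipschitzWith.of_dist_le_mul fun p q => ?_
  set t : ℝ := (p.2 : ℝ)
  set s : ℝ := (q.2 : ℝ)
  have ht₀ : 0 ≤ t := p.2.2.1
  have ht₁ : t ≤ 1 := p.2.2.2
  have hd : dist p.1 q.1 ≤ dist p q := le_max_left _ _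
  have hts : |t - s| ≤ dist p q := le_max_right _ _
  have key : AffineMap.lineMap (a p.1) (b p.1) t - AffineMap.lineMap (a q.1) (b q.1) s =
      (1 - t) • (a p.1 - a q.1) + t • (b p.1 - b q.1) + (t - s) • (b q.1 - a q.1) := by
    simp only [AffineMap.lineMap_apply_module']
    module
  have hK : (1 - t) * (Ka * dist p.1 q.1) + t * (Kb * dist p.1 q.1) ≤ max Ka Kb * dist p q :=
    calc _ ≤ (1 - t) * (max Ka Kb * dist p.1 q.1) + t * (max Ka Kb * dist p.1 q.1) := by
          gcongr
          exacts [le_max_left _ _, le_max_right _ _]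
      _ = max Ka Kb * dist p.1 q.1 := by ring
      _ ≤ max Ka Kb * dist p q := by gcongr
  rw [dist_eq_norm, key, NNReal.coe_add, add_mul]
  calc _ ≤ (1 - t) * (Ka * dist p.1 q.1) + t * (Kb * dist p.1 q.1) + |t - s| * R := by
        refine norm_add₃_le.trans ?_
        rw [norm_smul, norm_smul, norm_smul, Real.norm_of_nonneg (sub_nonneg.2 ht₁),
          Real.norm_of_nonneg ht₀, Real.norm_eq_abs, ← dist_eq_norm, ← dist_eq_norm,
          ← dist_eq_norm, dist_comm (b q.1)]
        gcongr
        exacts [ha.dist_le_mul _ _, hb.dist_le_mul _ _, hR _]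
    _ ≤ max Ka Kb * dist p q + R * dist p q := by
        rw [mul_comm (R : ℝ)]
        gcongr

section PartitionOfUnity

variable {X : Type*} [PseudoMetricSpace X]

/-- The case split avoids the junk value `infDist x ∅ = 0`, which would make the bump of `univ`
vanish. -/
noncomputable def lipBump (s : Set X) (x : X) : ℝ :=
  if s = univ then 1 else infDist x sᶜ

theorem lipBump_nonneg (s : Set X) (x : X) : 0 ≤ lipBump s x := by
  unfold lipBump
  split_ifs
  exacts [zero_le_one, infDist_nonneg]

theorem lipschitzWith_lipBump (s : Set X) : LipschitzWith 1 (lipBump s) := by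
  unfold lipBump
  split_ifs
  exacts [(LipschitzWith.const 1).weaken zero_le_one, lipschitz_infDist_pt _]

theorem lipBump_pos {s : Set X} (hs : IsOpen s) {x : X} (hx : x ∈ s) : 0 < lipBump s x := by
  unfold lipBump
  split_ifs with h
  · exact zero_lt_one
  · exact (hs.isClosed_compl.notMem_iff_infDist_pos (nonempty_compl.2 h)).1 (not_not.2 hx)

theorem mem_of_lipBump_ne_zero {s : Set X} {x : X} (h : lipBump s x ≠ 0) : x ∈ s := by
  unfold lipBump at h
  split_ifs at h with hs
  · exact hs ▸ mem_univ x
  · by_contra hx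
    exact h (infDist_zero_of_mem hx)

structure LipschitzPartitionOfUnity (ι : Type*) [Fintype ι] (U : ι → Set X) where
  toFun : ι → X → ℝ
  lipConst : ℝ≥0
  lipschitzWith : ∀ i, LipschitzWith lipConst (toFun i)
  nonneg : ∀ i x, 0 ≤ toFun i x
  sum_eq_one : ∀ x, ∑ i, toFun i x = 1
  mem_of_ne_zero : ∀ i x, toFun i x ≠ 0 → x ∈ U i

theorem LipschitzPartitionOfUnity.le_one {ι : Type*} [Fintype ι] {U : ι → Set X}
    (φ : LipschitzPartitionOfUnity ι U) (i : ι) (x : X) : φ.toFun i x ≤ 1 :=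
  φ.sum_eq_one x ▸ Finset.single_le_sum (fun j _ => φ.nonneg j x) (Finset.mem_univ i)

theorem LipschitzPartitionOfUnity.nonempty [CompactSpace X] {ι : Type*} [Fintype ι]
    {U : ι → Set X} (hU : ∀ i, IsOpen (U i)) (hcov : ⋃ i, U i = univ) :
    Nonempty (LipschitzPartitionOfUnity ι U) := by
  set S : X → ℝ := fun x => ∑ i, lipBump (U i) x
  have hS : LipschitzWith (∑ _i : ι, 1) S :=
    LipschitzWith.finset_sum _ fun i _ => lipschitzWith_lipBump (U i)
  have hS_pos (x : X) : 0 < S x := by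
    obtain ⟨i, hi⟩ := mem_iUnion.1 (hcov ▸ mem_univ x)
    exact Finset.sum_pos' (fun j _ => lipBump_nonneg _ x)
      ⟨i, Finset.mem_univ i, lipBump_pos (hU i) hi⟩
  obtain ⟨ε, hε, hεS⟩ :=
    isCompact_univ.exists_forall_le' hS.continuous.continuousOn fun x _ => hS_pos x
  have hbump_le (i : ι) (x : X) : lipBump (U i) x ≤ S x :=
    Finset.single_le_sum (fun j _ => lipBump_nonneg (U j) x) (Finset.mem_univ i)
  exact ⟨{
    toFun := fun i x => lipBump (U i) x / S x
    lipConst := _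
    lipschitzWith := fun i => (lipschitzWith_lipBump (U i)).div_of_le hS (lipBump_nonneg _)
      (hbump_le i) hε fun x => hεS x (mem_univ x)
    nonneg := fun i x => div_nonneg (lipBump_nonneg _ x) (hS_pos x).le
    sum_eq_one := fun x => by rw [← Finset.sum_div, div_self (hS_pos x).ne']
    mem_of_ne_zero := fun i x h =>
      mem_of_lipBump_ne_zero fun h0 => h (by rw [h0, zero_div]) }⟩

end PartitionOfUnity

theorem support_lineMap_subset {ι : Type*} (θ θ' : ι → ℝ) (t : ℝ) :
    Function.support (AffineMap.lineMap θ θ' t) ⊆ Function.support θ ∪ Function.support θ' := by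
  intro j hj
  by_contra h
  simp only [mem_union, Function.mem_support, not_or, not_not] at h
  simp [AffineMap.lineMap_apply_module, h.1, h.2] at hj

section Nerve

variable {M : Type*} [MetricSpace M] {N : ℕ} {U : Fin N → Set M}

theorem dist_le_one_of_mem_nerveSet {θ θ' : Fin N → ℝ} (hθ : θ ∈ NerveSet U)
    (hθ' : θ' ∈ NerveSet U) : dist θ θ' ≤ 1 :=
  (dist_pi_le_iff zero_le_one).2 fun j => Real.dist_le_of_mem_Icc_01 (hθ.1 j) (hθ'.1 j)

theorem lineMap_mem_nerveSet {θ θ' : Fin N → ℝ} (hθ : θ ∈ NerveSet U) (hθ' : θ' ∈ NerveSet U)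
    {t : ℝ} (ht : t ∈ Icc (0 : ℝ) 1) {x : M}
    (hx : ∀ j, AffineMap.lineMap θ θ' t j ≠ 0 → x ∈ U j) :
    AffineMap.lineMap θ θ' t ∈ NerveSet U := by
  refine ⟨fun j => ?_, ?_, x, mem_iInter₂.2 hx⟩
  · simpa [AffineMap.lineMap_apply_module] using
      (convex_Icc (0 : ℝ) 1).lineMap_mem (hθ.1 j) (hθ'.1 j) ht
  · simp only [AffineMap.lineMap_apply_module, Pi.add_apply, Pi.smul_apply, smul_eq_mul,
      Finset.sum_add_distrib, ← Finset.mul_sum, hθ.2.1, hθ'.2.1]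
    ring

namespace DSet

def mk (θ : NerveSet U) (x : M) (h : ∀ j, (θ : Fin N → ℝ) j ≠ 0 → x ∈ U j) : DSet U :=
  ⟨WithLp.toLp 2 (θ, x), mem_iInter₂.2 h⟩

def nerve (z : DSet U) : NerveSet U := z.1.fst

def base (z : DSet U) : M := z.1.snd

theorem base_mem (z : DSet U) (j : Fin N) (hj : (nerve z : Fin N → ℝ) j ≠ 0) : base z ∈ U j :=
  mem_iInter₂.1 z.2 j hj

theorem mk_nerve_base (z : DSet U) : mk (nerve z) (base z) (base_mem z) = z := rfl

theorem lipschitzWith_nerve : LipschitzWith 1 (nerve : DSet U → NerveSet U) :=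
  LipschitzWith.of_dist_le_mul fun z w => by
    rw [NNReal.coe_one, one_mul]
    exact WithLp.dist_fst_le z.1 w.1

theorem lipschitzWith_base : LipschitzWith 1 (base : DSet U → M) :=
  LipschitzWith.of_dist_le_mul fun z w => by
    rw [NNReal.coe_one, one_mul]
    exact WithLp.dist_snd_le z.1 w.1

theorem _root_.LipschitzWith.dSetMk {Z : Type*} [PseudoMetricSpace Z] {θ : Z → NerveSet U}
    {x : Z → M} {Kθ Kx : ℝ≥0} (hθ : LipschitzWith Kθ θ) (hx : LipschitzWith Kx x)
    (h : ∀ z j, (θ z : Fin N → ℝ) j ≠ 0 → x z ∈ U j) :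
    LipschitzWith (2 ^ (1 / (2 : ℝ≥0∞)).toReal * max Kθ Kx) fun z => mk (θ z) (x z) (h z) :=
  ((WithLp.prod_lipschitzWith_toLp 2 _ _).comp (hθ.prodMk hx)).subtype_mk _

end DSet

end Nerve

namespace LipschitzPartitionOfUnity

variable {M : Type*} [MetricSpace M] {N : ℕ} {U : Fin N → Set M}
  (φ : LipschitzPartitionOfUnity (Fin N) U)

def nerveMap (x : M) : NerveSet U :=
  ⟨fun j => φ.toFun j x, fun j => ⟨φ.nonneg j x, φ.le_one j x⟩, φ.sum_eq_one x, x,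
    mem_iInter₂.2 fun j => φ.mem_of_ne_zero j x⟩

theorem lipschitzWith_nerveMap : LipschitzWith φ.lipConst φ.nerveMap :=
  (LipschitzWith.pi φ.lipschitzWith).subtype_mk _

def toDSet (x : M) : DSet U :=
  DSet.mk (φ.nerveMap x) x fun j => φ.mem_of_ne_zero j x

theorem lipschitzWith_toDSet :
    LipschitzWith (2 ^ (1 / (2 : ℝ≥0∞)).toReal * max φ.lipConst 1) φ.toDSet :=
  φ.lipschitzWith_nerveMap.dSetMk LipschitzWith.id _

theorem base_comp_toDSet : DSet.base ∘ φ.toDSet = id := rfl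

theorem mem_of_lineMap_ne_zero (z : DSet U) (t : ℝ) (j : Fin N)
    (hj : AffineMap.lineMap (φ.nerveMap (DSet.base z) : Fin N → ℝ) (DSet.nerve z) t j ≠ 0) :
    DSet.base z ∈ U j := by
  rcases support_lineMap_subset _ _ t hj with hj | hj
  exacts [φ.mem_of_ne_zero j _ hj, DSet.base_mem z j hj]

def lineHomotopy (p : DSet U × unitInterval) : DSet U :=
  DSet.mk ⟨_, lineMap_mem_nerveSet (φ.nerveMap (DSet.base p.1)).2 (DSet.nerve p.1).2 p.2.2
    (φ.mem_of_lineMap_ne_zero p.1 p.2)⟩ (DSet.base p.1) (φ.mem_of_lineMap_ne_zero p.1 p.2)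

theorem lipHomotopic_toDSet_comp_base : LipHomotopic (φ.toDSet ∘ DSet.base) id := by
  have hφ : LipschitzWith (1 * (φ.lipConst * 1)) fun z : DSet U =>
      (φ.nerveMap (DSet.base z) : Fin N → ℝ) :=
    (LipschitzWith.subtype_val _).comp (φ.lipschitzWith_nerveMap.comp DSet.lipschitzWith_base)
  have hθ : LipschitzWith (1 * 1) fun z : DSet U => (DSet.nerve z : Fin N → ℝ) :=
    (LipschitzWith.subtype_val _).comp DSet.lipschitzWith_nerve
  have hnerve := hφ.lineMap hθ (R := 1) fun z =>
    dist_le_one_of_mem_nerveSet (φ.nerveMap _).2 (DSet.nerve z).2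
  refine ⟨φ.lineHomotopy, _,
    (hnerve.subtype_mk _).dSetMk (DSet.lipschitzWith_base.comp LipschitzWith.prod_fst) _,
    fun z => ?_, fun z => ?_⟩
  · simp [lineHomotopy, toDSet]
  · simp [lineHomotopy, DSet.mk_nerve_base]

end LipschitzPartitionOfUnity

theorem LipHomotopic.refl {X Y : Type*} [MetricSpace X] [MetricSpace Y] {f : X → Y} {K : ℝ≥0}
    (hf : LipschitzWith K f) : LipHomotopic f f :=
  ⟨f ∘ Prod.fst, _, hf.comp LipschitzWith.prod_fst, fun _ => rfl, fun _ => rfl⟩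

/-- A compact metric space `M` with a finite good covering `𝒰` is
Lipschitz homotopy equivalent to `D(𝒰)`. -/
theorem lipHomotopyEquiv_DSet {M : Type*} [MetricSpace M] [CompactSpace M]
    {N : ℕ} (U : Fin N → Set M) (hU : IsGoodCovering U) :
    LipHomotopyEquiv M (DSet U) := by
  obtain ⟨hopen, hcov, -⟩ := hU
  obtain ⟨φ⟩ := LipschitzPartitionOfUnity.nonempty hopen hcov
  refine ⟨φ.toDSet, DSet.base, _, 1, φ.lipschitzWith_toDSet, DSet.lipschitzWith_base, ?_,
    φ.lipHomotopic_toDSet_comp_base⟩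
  rw [φ.base_comp_toDSet]
  exact .refl LipschitzWith.id
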